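/- Let G be a quasi-4-connected finite simple graph with |V(G)| ≥ 8. Then 𝒯 := {(Y,S,Z) : (Y,S,Z) is a separation of G of order < 4 with |Y| < |Z|} is a G-tangle of order 4. -/

import Mathlib

variable {V : Type*} {W : Type*}

/-- A separation (Y,S,Z) of a graph: pairwise disjoint sets covering the vertex set,
with no edge between Y and Z. -/
def IsSeparation (G : SimpleGraph V) (Y S Z : Set V) : Prop :=
  Disjoint Y S ∧ Disjoint Y Z ∧ Disjoint S Z ∧ Y ∪ S ∪ Z = Set.univ ∧
    ∀ y ∈ Y, ∀ z ∈ Z, ¬ G.Adj y z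

/-- `G` is `k`-connected: more than `k` vertices and no proper separation of order `< k`. -/
def KConnected (k : ℕ) (G : SimpleGraph V) : Prop :=
  k < Nat.card V ∧
    ∀ Y S Z : Set V, IsSeparation G Y S Z → Y.Nonempty → Z.Nonempty → k ≤ S.ncard

/-- `G` is quasi-4-connected. -/
def Quasi4Connected (G : SimpleGraph V) : Prop :=
  KConnected 3 G ∧
    ∀ Y S Z : Set V, IsSeparation G Y S Z → S.ncard = 3 → Y.ncard ≤ 1 ∨ Z.ncard ≤ 1

/-- `T` is a `G`-tangle of order `k`. -/
def IsTangle (G : SimpleGraph V) (k : ℕ) (T : Set (Set V × Set V × Set V)) : Prop :=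
  (∀ p ∈ T, IsSeparation G p.1 p.2.1 p.2.2 ∧ p.2.1.ncard < k) ∧
  (∀ Y S Z : Set V, IsSeparation G Y S Z → S.ncard < k →
    (Y, S, Z) ∈ T ∨ (Z, S, Y) ∈ T) ∧
  (∀ p₁ ∈ T, ∀ p₂ ∈ T, ∀ p₃ ∈ T,
    (p₁.2.2 ∩ p₂.2.2 ∩ p₃.2.2 : Set V).Nonempty ∨
      ∃ u v : V, G.Adj u v ∧ (u ∈ p₁.2.2 ∨ v ∈ p₁.2.2) ∧
        (u ∈ p₂.2.2 ∨ v ∈ p₂.2.2) ∧ (u ∈ p₃.2.2 ∨ v ∈ p₃.2.2)) ∧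
  (∀ p ∈ T, (p.2.2 : Set V).Nonempty)

/-- The order `⪯` on separations: (Y,S,Z) ⪯ (Y',S',Z') iff S ∪ Z ⊊ S' ∪ Z', or
S ∪ Z = S' ∪ Z' and S ⊆ S'. -/
def SepLE (p q : Set V × Set V × Set V) : Prop :=
  p.2.1 ∪ p.2.2 ⊂ q.2.1 ∪ q.2.2 ∨
    (p.2.1 ∪ p.2.2 = q.2.1 ∪ q.2.2 ∧ p.2.1 ⊆ q.2.1)

/-- `p` is a `⪯`-minimal element of `T`. -/
def IsMinimalIn (T : Set (Set V × Set V × Set V)) (p : Set V × Set V × Set V) : Prop :=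
  p ∈ T ∧ ∀ q ∈ T, SepLE q p → q = p

/-- Two separations are orthogonal. (They cross if they are not orthogonal.) -/
def SepOrthogonal (p q : Set V × Set V × Set V) : Prop :=
  (p.1 ∪ p.2.1) ∩ (q.1 ∪ q.2.1) ⊆ p.2.1 ∩ q.2.1

/-- A separation (Y,S,Z) is degenerate: |Y| = 1 and S is an independent set. -/
def Degenerate (G : SimpleGraph V) (Y S Z : Set V) : Prop :=
  Y.ncard = 1 ∧ ∀ u ∈ S, ∀ v ∈ S, ¬ G.Adj u v

/-- The neighbourhood N(X): vertices outside X adjacent to a vertex of X. -/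
def Nbhd (G : SimpleGraph V) (X : Set V) : Set V :=
  {v | v ∉ X ∧ ∃ u ∈ X, G.Adj u v}

/-- `C` is (the vertex set of) a connected component of `G − X`. -/
def IsCompOutside (G : SimpleGraph V) (X C : Set V) : Prop :=
  C ⊆ Xᶜ ∧ (G.induce C).Connected ∧ ∀ u ∈ C, ∀ v : V, v ∉ X → G.Adj u v → v ∈ C

/-- The torso `G⟦X⟧` of `X` in `G`. -/
def torso (G : SimpleGraph V) (X : Set V) : SimpleGraph X where
  Adj u v := u ≠ v ∧ (G.Adj (u : V) (v : V) ∨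
    ∃ C : Set V, IsCompOutside G X C ∧ (u : V) ∈ Nbhd G C ∧ (v : V) ∈ Nbhd G C)
  symm := by
    constructor
    rintro u v ⟨hne, h | ⟨C, hC, hu, hv⟩⟩
    · exact ⟨hne.symm, Or.inl h.symm⟩
    · exact ⟨hne.symm, Or.inr ⟨C, hC, hv, hu⟩⟩
  loopless := by
    constructor
    intro u h
    exact h.1 rfl

/-- `H` is a minor of `G`. -/
def IsMinor (H : SimpleGraph W) (G : SimpleGraph V) : Prop :=
  ∃ M : W → Set V,
    (∀ w : W, (G.induce (M w)).Connected) ∧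
    (Pairwise fun w w' : W => Disjoint (M w) (M w')) ∧
    ∀ w w' : W, H.Adj w w' → ∃ u ∈ M w, ∃ v ∈ M w', G.Adj u v

/-- `M` is a faithful model of the graph `H` (with vertex set `X ⊆ V(G)`) in `G`. -/
def FaithfulModel (G : SimpleGraph V) (X : Set V) (H : SimpleGraph X)
    (M : X → Set V) : Prop :=
  (∀ w : X, (w : V) ∈ M w) ∧
  (∀ w : X, (G.induce (M w)).Connected) ∧
  (Pairwise fun w w' : X => Disjoint (M w) (M w')) ∧
  ∀ w w' : X, H.Adj w w' → ∃ u ∈ M w, ∃ v ∈ M w', G.Adj u v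

/-- `H` (a graph with vertex set `X ⊆ V(G)`) is a faithful minor of `G`. -/
def IsFaithfulMinor (G : SimpleGraph V) (X : Set V) (H : SimpleGraph X) : Prop :=
  ∃ M : X → Set V, FaithfulModel G X H M

/-- The projection of a separation of `G` to a minor with model `M`. -/
def projSep {X : Set V} (M : X → Set V) (p : Set V × Set V × Set V) :
    Set X × Set X × Set X :=
  ({w : X | M w ⊆ p.1}, {w : X | (M w ∩ p.2.1).Nonempty}, {w : X | M w ⊆ p.2.2})

/-- The graph TH₊₃: vertices 0,1,2,3 are v₁,v₂,v₃,v₄ (pairwise adjacent); 4,5,6 are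
w₁,w₂,w₃ with w₁ ~ v₁,v₂,v₃, w₂ ~ v₁,v₂,v₄, w₃ ~ v₁,v₃,v₄. -/
def TH3 : SimpleGraph (Fin 7) :=
  SimpleGraph.fromRel (fun u v =>
    (u.val < 4 ∧ v.val < 4) ∨
    (u.val = 4 ∧ (v.val = 0 ∨ v.val = 1 ∨ v.val = 2)) ∨
    (u.val = 5 ∧ (v.val = 0 ∨ v.val = 1 ∨ v.val = 3)) ∨
    (u.val = 6 ∧ (v.val = 0 ∨ v.val = 2 ∨ v.val = 3)))

/-- The graph TR₊₃: vertices 0,1,2 are v₁,v₂,v₃ (pairwise adjacent); 3,4,5 are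
w₁,w₂,w₃, each adjacent to each of v₁,v₂,v₃. -/
def TR3 : SimpleGraph (Fin 6) :=
  SimpleGraph.fromRel (fun u v =>
    (u.val < 3 ∧ v.val < 3) ∨ (3 ≤ u.val ∧ v.val < 3))

/-- A graph is exceptional if it embeds (injectively, preserving adjacency)
into TH₊₃ or into TR₊₃. -/
def Exceptional (H : SimpleGraph W) : Prop :=
  (∃ f : W → Fin 7, Function.Injective f ∧ ∀ u v : W, H.Adj u v → TH3.Adj (f u) (f v)) ∨
  (∃ f : W → Fin 6, Function.Injective f ∧ ∀ u v : W, H.Adj u v → TR3.Adj (f u) (f v))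

/-- `X` is a `k`-inseparable set of `G`. -/
def KInseparable (G : SimpleGraph V) (k : ℕ) (X : Set V) : Prop :=
  k < X.ncard ∧
    ¬ ∃ Y S Z : Set V, IsSeparation G Y S Z ∧ S.ncard ≤ k ∧
      (X ∩ Y).Nonempty ∧ (X ∩ Z).Nonempty

/-- A triconnected region: a maximal 2-inseparable set of size ≥ 4. -/
def TriconnectedRegion (G : SimpleGraph V) (R : Set V) : Prop :=
  KInseparable G 2 R ∧ 4 ≤ R.ncard ∧ ∀ R' : Set V, R ⊂ R' → ¬ KInseparable G 2 R'

/-- `H` is a topological subgraph of `G`. -/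
def IsTopologicalSubgraph (H : SimpleGraph W) (G : SimpleGraph V) : Prop :=
  ∃ (φ : W → V) (P : ∀ u v : W, H.Adj u v → G.Walk (φ u) (φ v)),
    Function.Injective φ ∧
    (∀ u v (h : H.Adj u v), (P u v h).IsPath) ∧
    (∀ u v (h : H.Adj u v), P u v h = (P v u h.symm).reverse) ∧
    (∀ u v (h : H.Adj u v), ∀ x ∈ (P u v h).support,
      x ∈ Set.range φ → x = φ u ∨ x = φ v) ∧
    (∀ u v (h : H.Adj u v), ∀ u' v' (h' : H.Adj u' v'), s(u, v) ≠ s(u', v') →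
      ∀ x ∈ (P u v h).support, x ∈ (P u' v' h').support →
        (x = φ u ∨ x = φ v) ∧ (x = φ u' ∨ x = φ v'))

/-- A quasi-4-connected region of a 3-connected graph. -/
def Quasi4Region (G : SimpleGraph V) (R : Set V) : Prop :=
  IsFaithfulMinor G R (torso G R) ∧ Quasi4Connected (torso G R) ∧
    ∀ C : Set V, IsCompOutside G R C → (Nbhd G C).ncard = 3

/-- A split vertex of a separation (Y₀,S₀,Z₀). -/
def SplitVertex (G : SimpleGraph V) (S₀ Z₀ : Set V) (z : V) : Prop :=
  z ∈ Z₀ ∧ ∀ C : Set V, IsCompOutside G (S₀ ∪ {z}) C → (Nbhd G C).ncard = 3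

/-- The graph obtained from `G` by contracting the edge `s₁s₂` onto `s₁`. -/
def contractEdge (G : SimpleGraph V) (s₁ s₂ : V) : SimpleGraph ({s₂}ᶜ : Set V) where
  Adj u v := u ≠ v ∧ (G.Adj (u : V) (v : V) ∨
    ((u : V) = s₁ ∧ G.Adj (v : V) s₂) ∨ ((v : V) = s₁ ∧ G.Adj (u : V) s₂))
  symm := by
    constructor
    rintro u v ⟨hne, h | h | h⟩
    · exact ⟨hne.symm, Or.inl h.symm⟩
    · exact ⟨hne.symm, Or.inr (Or.inr h)⟩
    · exact ⟨hne.symm, Or.inr (Or.inl h)⟩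
  loopless := by
    constructor
    intro u h
    exact h.1 rfl

/-- `s t` are the endvertices of a crossedge of two crossing non-degenerate minimal
separations of the tangle `T`, with `s ∈ S₁` and `t ∈ S₂`. -/
def IsNondegCrossedge (G : SimpleGraph V) (T : Set (Set V × Set V × Set V))
    (s t : V) : Prop :=
  ∃ p q : Set V × Set V × Set V,
    IsMinimalIn T p ∧ IsMinimalIn T q ∧
    ¬ Degenerate G p.1 p.2.1 p.2.2 ∧ ¬ Degenerate G q.1 q.2.1 q.2.2 ∧
    ¬ SepOrthogonal p q ∧ G.Adj s t ∧ p.2.1 ∩ q.1 = {s} ∧ q.2.1 ∩ p.1 = {t}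

/-! A tangle member (Y,S,Z) of a quasi-4-connected graph has |Y| ≤ 1, so Zᶜ = Y ∪ S has at
most four vertices. If three members violated (T2), every vertex would lie in one of the three
sets Zᵢᶜ and every edge inside one of them. A vertex lying in only one Zᵢᶜ then has all its
neighbours there, so 3-connectivity leaves at most one such vertex per i; double counting gives
2|V| ≤ 3 · 4 + 3, contradicting |V| ≥ 8. -/

open Set

variable {G : SimpleGraph V} {Y S Z : Set V}

namespace IsSeparation

lemma symm (h : IsSeparation G Y S Z) : IsSeparation G Z S Y := by
  obtain ⟨hYS, hYZ, hSZ, hcover, hadj⟩ := h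
  refine ⟨hSZ.symm, hYZ.symm, hYS.symm, ?_, fun z hz y hy hzy => hadj y hy z hz hzy.symm⟩
  rw [← hcover]
  ac_rfl

lemma compl_eq (h : IsSeparation G Y S Z) : Zᶜ = Y ∪ S := by
  obtain ⟨-, hYZ, hSZ, hcover, -⟩ := h
  exact IsCompl.compl_eq
    ⟨(disjoint_union_left.mpr ⟨hYZ, hSZ⟩).symm, (codisjoint_iff.mpr hcover).symm⟩

lemma ncard_add_ncard_add_ncard [Finite V] (h : IsSeparation G Y S Z) :
    Y.ncard + S.ncard + Z.ncard = Nat.card V := by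
  rw [← ncard_union_eq h.1, ← h.compl_eq, ncard_compl_add_ncard]

end IsSeparation

lemma two_mul_card_le_of_union_eq_univ {α : Type*} [Finite α] {A₁ A₂ A₃ : Set α}
    (h : A₁ ∪ A₂ ∪ A₃ = univ) :
    2 * Nat.card α ≤ A₁.ncard + A₂.ncard + A₃.ncard + (A₁ \ (A₂ ∪ A₃)).ncard +
      (A₂ \ (A₁ ∪ A₃)).ncard + (A₃ \ (A₁ ∪ A₂)).ncard := by
  classical
  have := Fintype.ofFinite α
  let c (s : Set α) (v : α) : ℕ := if v ∈ s then 1 else 0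
  have hcount (s : Set α) : s.ncard = ∑ v, c s v := by
    rw [Finset.sum_boole]
    simp [ncard_eq_toFinset_card']
  calc 2 * Nat.card α = ∑ _v : α, 2 := by simp [mul_comm]
    _ ≤ ∑ v, (c A₁ v + c A₂ v + c A₃ v + c (A₁ \ (A₂ ∪ A₃)) v + c (A₂ \ (A₁ ∪ A₃)) v +
        c (A₃ \ (A₁ ∪ A₂)) v) := Finset.sum_le_sum fun v _ => ?_
    _ = _ := by simp only [Finset.sum_add_distrib, ← hcount]
  have hv : v ∈ A₁ ∪ A₂ ∪ A₃ := h ▸ mem_univ v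
  simp only [c, mem_union, mem_sdiff] at hv ⊢
  split_ifs <;> tauto

lemma KConnected.ncard_le_one_of_forall_not_adj [Finite V] (hk : KConnected 3 G)
    {A P : Set V} (hA : A.ncard ≤ 4) (hAc : Aᶜ.Nonempty) (hPA : P ⊆ A)
    (hP : ∀ y ∈ P, ∀ z ∈ Aᶜ, ¬ G.Adj y z) : P.ncard ≤ 1 := by
  rcases P.eq_empty_or_nonempty with rfl | hPne
  · simp
  have hsep : IsSeparation G P (A \ P) Aᶜ := by
    refine ⟨disjoint_sdiff_right, disjoint_compl_right_iff_subset.mpr hPA,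
      disjoint_compl_right_iff_subset.mpr sdiff_subset, ?_, hP⟩
    rw [union_sdiff_cancel hPA, union_compl_self]
  have := hk.2 _ _ _ hsep hPne hAc
  have := ncard_sdiff_add_ncard_of_subset hPA
  omega

lemma KConnected.ncard_sdiff_union_le_one [Finite V] (hk : KConnected 3 G) {A B C : Set V}
    (hA : A.ncard ≤ 4) (hAc : Aᶜ.Nonempty)
    (hE : ∀ u v, G.Adj u v → (u ∈ A ∧ v ∈ A) ∨ (u ∈ B ∧ v ∈ B) ∨ (u ∈ C ∧ v ∈ C)) :
    (A \ (B ∪ C)).ncard ≤ 1 := by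
  refine hk.ncard_le_one_of_forall_not_adj hA hAc sdiff_subset fun y hy z hz hyz => ?_
  rcases hE y z hyz with h | h | h
  · exact hz h.2
  · exact hy.2 (Or.inl h.1)
  · exact hy.2 (Or.inr h.1)

lemma KConnected.card_le_seven [Finite V] (hk : KConnected 3 G) {Z₁ Z₂ Z₃ : Set V}
    (h₁ : Z₁.Nonempty) (h₂ : Z₂.Nonempty) (h₃ : Z₃.Nonempty)
    (hc₁ : Z₁ᶜ.ncard ≤ 4) (hc₂ : Z₂ᶜ.ncard ≤ 4) (hc₃ : Z₃ᶜ.ncard ≤ 4)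
    (hZ : Z₁ ∩ Z₂ ∩ Z₃ = ∅)
    (hE : ¬ ∃ u v, G.Adj u v ∧ (u ∈ Z₁ ∨ v ∈ Z₁) ∧ (u ∈ Z₂ ∨ v ∈ Z₂) ∧ (u ∈ Z₃ ∨ v ∈ Z₃)) :
    Nat.card V ≤ 7 := by
  have hcover : Z₁ᶜ ∪ Z₂ᶜ ∪ Z₃ᶜ = univ := by
    rw [← compl_inter, ← compl_inter, hZ, compl_empty]
  have hedge : ∀ u v, G.Adj u v →
      (u ∈ Z₁ᶜ ∧ v ∈ Z₁ᶜ) ∨ (u ∈ Z₂ᶜ ∧ v ∈ Z₂ᶜ) ∨ (u ∈ Z₃ᶜ ∧ v ∈ Z₃ᶜ) := by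
    intro u v huv
    simp only [mem_compl_iff]
    by_contra h
    exact hE ⟨u, v, huv, by tauto⟩
  have hP₁ := hk.ncard_sdiff_union_le_one hc₁ (by rwa [compl_compl]) hedge
  have hP₂ := hk.ncard_sdiff_union_le_one (B := Z₁ᶜ) (C := Z₃ᶜ) hc₂ (by rwa [compl_compl])
    fun u v huv => by have := hedge u v huv; tauto
  have hP₃ := hk.ncard_sdiff_union_le_one (B := Z₁ᶜ) (C := Z₂ᶜ) hc₃ (by rwa [compl_compl])
    fun u v huv => by have := hedge u v huv; tauto
  have := two_mul_card_le_of_union_eq_univ hcover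
  omega

namespace Quasi4Connected

lemma ncard_le_one_or_ncard_le_one (hq : Quasi4Connected G) (h : IsSeparation G Y S Z)
    (hS : S.ncard < 4) : Y.ncard ≤ 1 ∨ Z.ncard ≤ 1 := by
  rcases Y.eq_empty_or_nonempty with rfl | hY
  · simp
  rcases Z.eq_empty_or_nonempty with rfl | hZ
  · simp
  exact hq.2 Y S Z h (le_antisymm (by omega) (hq.1.2 Y S Z h hY hZ))

lemma ncard_ne_ncard [Finite V] (hq : Quasi4Connected G) (hcard : 5 < Nat.card V)
    (h : IsSeparation G Y S Z) (hS : S.ncard < 4) : Y.ncard ≠ Z.ncard := by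
  have := h.ncard_add_ncard_add_ncard
  rcases hq.ncard_le_one_or_ncard_le_one h hS with h1 | h1 <;> omega

lemma ncard_compl_le_four (hq : Quasi4Connected G) (h : IsSeparation G Y S Z)
    (hS : S.ncard < 4) (hYZ : Y.ncard < Z.ncard) : Zᶜ.ncard ≤ 4 := by
  have hY : Y.ncard ≤ 1 := by
    rcases hq.ncard_le_one_or_ncard_le_one h hS with h1 | h1 <;> omega
  rw [h.compl_eq]
  exact (ncard_union_le Y S).trans (by omega)

end Quasi4Connected

theorem statement9_general {V : Type*} (G : SimpleGraph V)
    (hq : Quasi4Connected G) (hcard : 8 ≤ Nat.card V) :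
    IsTangle G 4 {p : Set V × Set V × Set V |
      IsSeparation G p.1 p.2.1 p.2.2 ∧ p.2.1.ncard < 4 ∧
        p.1.ncard < p.2.2.ncard} := by
  have : Finite V := Nat.finite_of_card_ne_zero (by omega)
  have hZ : ∀ p : Set V × Set V × Set V, p.1.ncard < p.2.2.ncard → p.2.2.Nonempty :=
    fun p hp => (ncard_pos (toFinite _)).mp (by omega)
  refine ⟨fun p hp => ⟨hp.1, hp.2.1⟩, ?_, ?_, fun p hp => hZ p hp.2.2⟩
  · intro Y S Z hsep hS
    rcases lt_or_gt_of_ne (hq.ncard_ne_ncard (by omega) hsep hS) with h | h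
    · exact Or.inl ⟨hsep, hS, h⟩
    · exact Or.inr ⟨hsep.symm, hS, h⟩
  · rintro p₁ ⟨hs₁, hS₁, h₁⟩ p₂ ⟨hs₂, hS₂, h₂⟩ p₃ ⟨hs₃, hS₃, h₃⟩
    rw [or_iff_not_imp_left, not_nonempty_iff_eq_empty]
    intro hint
    by_contra hE
    have := hq.1.card_le_seven (hZ p₁ h₁) (hZ p₂ h₂) (hZ p₃ h₃)
      (hq.ncard_compl_le_four hs₁ hS₁ h₁) (hq.ncard_compl_le_four hs₂ hS₂ h₂)
      (hq.ncard_compl_le_four hs₃ hS₃ h₃) hint hE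
    omega

/-- for a quasi-4-connected graph with at least 8 vertices, the
separations of order < 4 with |Y| < |Z| form a tangle of order 4. -/
theorem statement9 {V : Type*} [Fintype V] (G : SimpleGraph V)
    (hq : Quasi4Connected G) (hcard : 8 ≤ Nat.card V) :
    IsTangle G 4 {p : Set V × Set V × Set V |
      IsSeparation G p.1 p.2.1 p.2.2 ∧ p.2.1.ncard < 4 ∧
        p.1.ncard < p.2.2.ncard} :=
  statement9_general G hq hcard
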